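/- Let C ⊆ {0,1}^n be a code, W a subset of the 2n variables {x_1,...,x_n,y_1,...,y_n}, and b(W) = {i : x_i ∈ W and y_i ∈ W}. Let V_W ⊆ {0,1}^{[n]∖b(W)} be the interval of points with value 0 at indices i with x_i ∈ W, y_i ∉ W and value 1 at indices j with y_j ∈ W, x_j ∉ W. Then the monomial prime q_W generated by the variables in W contains the polarized neural ideal P(J_C) if and only if V_W ⊆ C/b(W), where C/b(W) is the code obtained from C by deleting the coordinates in b(W). -/

import Mathlib

/-!
A pseudomonomial `x^σ (1 - x)^τ` lies in `J_C` iff it vanishes on `C`, and it is nonzero exactly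
at the words that are `1` on `σ` and `0` on `τ`; its polarization lies in `q_W` iff `σ` meets
`x(W) ∪ b(W)` or `τ` meets `y(W) ∪ b(W)`.

If `V_W ⊆ C/b(W)` and a minimal pseudomonomial of `J_C` had its polarization outside `q_W`, the
point of `V_W` that is `1` on `σ` and `0` on `τ` would lift to a codeword at which that
pseudomonomial does not vanish.
Conversely, a point `v ∈ V_W` outside `C/b(W)` gives the pseudomonomial
`x^{v⁻¹(1)} (1 - x)^{v⁻¹(0)}` of `J_C`. Over `𝔽₂` its factors `x_i`, `1 - x_j` are prime and the
only unit is `1`, so its divisors are its subproducts and it is divisible by a minimal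
pseudomonomial of `J_C`; the polarization of that one is not in `q_W`, as `v` is `0` on `x(W)` and
`1` on `y(W)`.
-/

open MvPolynomial

/-- The pseudomonomial with data `(σ, τ)`: `∏_{i∈σ} x_i · ∏_{j∈τ} (1 - x_j)`. -/
noncomputable def psm {n : ℕ} (σ τ : Finset (Fin n)) :
    MvPolynomial (Fin n) (ZMod 2) :=
  (∏ i ∈ σ, X i) * ∏ j ∈ τ, (1 - X j)

/-- The polarization of the pseudomonomial with data `(σ, τ)` in
`S = F₂[x_1,…,x_n,y_1,…,y_n]`, where `x_i = X (Sum.inl i)`, `y_j = X (Sum.inr j)`. -/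
noncomputable def polz {n : ℕ} (σ τ : Finset (Fin n)) :
    MvPolynomial (Fin n ⊕ Fin n) (ZMod 2) :=
  (∏ i ∈ σ, X (Sum.inl i)) * ∏ j ∈ τ, X (Sum.inr j)

/-- A pseudomonomial: a product `∏_{i∈σ} x_i ∏_{j∈τ}(1 - x_j)` with `σ, τ` disjoint. -/
def IsPseudomonomial {n : ℕ} (f : MvPolynomial (Fin n) (ZMod 2)) : Prop :=
  ∃ σ τ : Finset (Fin n), Disjoint σ τ ∧ f = psm σ τ

/-- `f` is a minimal pseudomonomial of `I`. -/
def IsMinimalPseudomonomial {n : ℕ} (I : Ideal (MvPolynomial (Fin n) (ZMod 2)))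
    (f : MvPolynomial (Fin n) (ZMod 2)) : Prop :=
  IsPseudomonomial f ∧ f ∈ I ∧
    ∀ g : MvPolynomial (Fin n) (ZMod 2), g ∣ f → ¬ f ∣ g → g ∉ I

/-- The indicator pseudomonomial of a word `c ∈ {0,1}ⁿ`:
`∏_{c_i = 1} x_i · ∏_{c_j = 0} (1 - x_j)`. -/
noncomputable def indic {n : ℕ} (c : Fin n → ZMod 2) :
    MvPolynomial (Fin n) (ZMod 2) :=
  ∏ i : Fin n, (if c i = 1 then X i else 1 - X i)

/-- The neural ideal of a code `C ⊆ {0,1}ⁿ`. -/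
noncomputable def neuralIdeal {n : ℕ} (C : Set (Fin n → ZMod 2)) :
    Ideal (MvPolynomial (Fin n) (ZMod 2)) :=
  Ideal.span {f | ∃ c ∉ C, f = indic c}

/-- The polarization of the neural ideal: the squarefree monomial ideal generated by
the polarizations of the minimal pseudomonomials of `J_C`. -/
noncomputable def polarNeuralIdeal {n : ℕ} (C : Set (Fin n → ZMod 2)) :
    Ideal (MvPolynomial (Fin n ⊕ Fin n) (ZMod 2)) :=
  Ideal.span {m | ∃ σ τ : Finset (Fin n), Disjoint σ τ ∧
    IsMinimalPseudomonomial (neuralIdeal C) (psm σ τ) ∧ m = polz σ τ}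

open Finset

namespace MvPolynomial

variable {σ R : Type*}

theorem prod_X_mem_span_X_image_iff [CommSemiring R] [Nontrivial R] {u : Finset σ}
    {W : Set σ} :
    ∏ k ∈ u, X k ∈ Ideal.span (X '' W : Set (MvPolynomial σ R)) ↔ ∃ k ∈ u, k ∈ W := by
  classical
  simp_rw [X, ← monomial_sum_one, mem_ideal_span_X_image, support_monomial, if_neg one_ne_zero,
    Finset.mem_singleton, forall_eq, Finsupp.finsetSum_apply, Finsupp.single_apply]
  simp [and_comm]

theorem prime_one_sub_X [CommRing R] [IsDomain R] (i : σ) :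
    Prime (1 - X i : MvPolynomial σ R) := by
  classical
  let φ : MvPolynomial σ R →ₐ[R] MvPolynomial σ R := aeval (Function.update X i (1 - X i))
  have hφφ : φ.comp φ = AlgHom.id R _ := by
    ext k
    by_cases hk : k = i
    · subst hk; simp [φ]
    · simp [φ, hk]
  let e := AlgEquiv.ofAlgHom φ φ hφφ hφφ
  have he : e (X i) = 1 - X i := by simp [e, φ]
  rw [← he, MulEquiv.prime_iff]
  exact X_prime

instance [CommRing R] [IsReduced R] [Subsingleton Rˣ] : Subsingleton (MvPolynomial σ R)ˣ := by
  refine ⟨fun u v => Units.ext ?_⟩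
  obtain ⟨r, hr, hu⟩ := isUnit_iff_eq_C_of_isReduced.mp u.isUnit
  obtain ⟨s, hs, hv⟩ := isUnit_iff_eq_C_of_isReduced.mp v.isUnit
  rw [hu, hv, isUnit_iff_eq_one.mp hr, isUnit_iff_eq_one.mp hs]

end MvPolynomial

theorem exists_subset_eq_prod_of_dvd_prod {M ι : Type*} [CommMonoidWithZero M]
    [IsCancelMulZero M] [Subsingleton Mˣ] {f : ι → M} (hf : ∀ i, Prime (f i)) {s : Finset ι} {a : M}
    (h : a ∣ ∏ i ∈ s, f i) : ∃ t ⊆ s, a = ∏ i ∈ t, f i := by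
  classical
  induction s using Finset.induction_on generalizing a with
  | empty => exact ⟨∅, subset_rfl, by simpa [isUnit_iff_eq_one] using isUnit_of_dvd_one h⟩
  | @insert i s hi ih =>
    rw [prod_insert hi] at h
    rcases (hf i).left_dvd_or_dvd_right_of_dvd_mul h with ⟨b, rfl⟩ | h
    · obtain ⟨t, hts, rfl⟩ := ih ((mul_dvd_mul_iff_left (hf i).ne_zero).mp h)
      exact ⟨insert i t, insert_subset_insert i hts, (prod_insert fun hit => hi (hts hit)).symm⟩
    · obtain ⟨t, hts, rfl⟩ := ih h
      exact ⟨t, hts.trans (subset_insert i s), rfl⟩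

section Pseudomonomial

variable {n : ℕ}

noncomputable def psmFactor : Fin n ⊕ Fin n → MvPolynomial (Fin n) (ZMod 2) :=
  Sum.elim X fun j => 1 - X j

theorem prime_psmFactor (k : Fin n ⊕ Fin n) : Prime (psmFactor k) := by
  cases k with
  | inl i => exact X_prime
  | inr j => exact prime_one_sub_X j

theorem psm_eq_prod_psmFactor (σ τ : Finset (Fin n)) :
    psm σ τ = ∏ k ∈ σ.disjSum τ, psmFactor k := by
  simp [psm, psmFactor, prod_disjSum]

theorem exists_subset_eq_psm_of_dvd_psm {σ τ : Finset (Fin n)}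
    {g : MvPolynomial (Fin n) (ZMod 2)} (h : g ∣ psm σ τ) :
    ∃ σ' ⊆ σ, ∃ τ' ⊆ τ, g = psm σ' τ' := by
  rw [psm_eq_prod_psmFactor] at h
  obtain ⟨t, hts, rfl⟩ := exists_subset_eq_prod_of_dvd_prod prime_psmFactor h
  rw [subset_disjSum] at hts
  exact ⟨t.toLeft, hts.1, t.toRight, hts.2, by rw [psm_eq_prod_psmFactor, toLeft_disjSum_toRight]⟩

theorem exists_isMinimalPseudomonomial_subset {I : Ideal (MvPolynomial (Fin n) (ZMod 2))}
    {σ τ : Finset (Fin n)} (hd : Disjoint σ τ) (h : psm σ τ ∈ I) :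
    ∃ σ' ⊆ σ, ∃ τ' ⊆ τ, IsMinimalPseudomonomial I (psm σ' τ') := by
  obtain ⟨⟨σ', τ'⟩, hle, hmin⟩ :=
    exists_minimal_le_of_wellFoundedLT (fun p : Finset (Fin n) × Finset (Fin n) => psm p.1 p.2 ∈ I)
      (σ, τ) h
  obtain ⟨hσ, hτ⟩ := Prod.mk_le_mk.mp hle
  refine ⟨σ', hσ, τ', hτ, ⟨σ', τ', hd.mono hσ hτ, rfl⟩, hmin.prop, fun g hg hng hgI => hng ?_⟩
  obtain ⟨σ'', hσ'', τ'', hτ'', rfl⟩ := exists_subset_eq_psm_of_dvd_psm hg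
  obtain ⟨rfl, rfl⟩ : σ'' = σ' ∧ τ'' = τ' :=
    Prod.mk_inj.mp (hmin.eq_of_le (y := (σ'', τ'')) hgI ⟨hσ'', hτ''⟩)
  exact dvd_rfl

theorem eval_psm_ne_zero_iff {c : Fin n → ZMod 2} {σ τ : Finset (Fin n)} :
    eval c (psm σ τ) ≠ 0 ↔ (∀ i ∈ σ, c i = 1) ∧ ∀ j ∈ τ, c j = 0 := by
  have h1 : ∀ a : ZMod 2, a ≠ 0 ↔ a = 1 := by decide
  simp [psm, h1]

theorem eval_indic (c c' : Fin n → ZMod 2) : eval c (indic c') = if c = c' then 1 else 0 := by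
  have h : ∀ a b : ZMod 2, (if b = 1 then a else 1 - a) = if a = b then 1 else 0 := by decide
  simp only [indic, map_prod, apply_ite (eval c), eval_X, map_sub, map_one, h, prod_boole,
    mem_univ, true_implies, _root_.funext_iff]

theorem eval_eq_zero_of_mem_neuralIdeal {C : Set (Fin n → ZMod 2)}
    {f : MvPolynomial (Fin n) (ZMod 2)} (hf : f ∈ neuralIdeal C) {c : Fin n → ZMod 2}
    (hc : c ∈ C) : eval c f = 0 := by
  refine (Ideal.span_le (I := RingHom.ker (eval c)) |>.mpr ?_) hf
  rintro _ ⟨c', hc', rfl⟩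
  rw [SetLike.mem_coe, RingHom.mem_ker, eval_indic, if_neg (ne_of_mem_of_not_mem hc hc')]

theorem psm_eq_sum_indic {σ τ : Finset (Fin n)} (hd : Disjoint σ τ) :
    psm σ τ = ∑ c ∈ Fintype.piFinset
      (fun i => if i ∈ σ then {1} else if i ∈ τ then {0} else univ), indic c := by
  have hsum : ∀ i,
      ∑ a ∈ (if i ∈ σ then {1} else if i ∈ τ then {0} else univ : Finset (ZMod 2)),
      (if a = 1 then X i else 1 - X i : MvPolynomial (Fin n) (ZMod 2)) =
      if i ∈ σ then X i else if i ∈ τ then 1 - X i else 1 := by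
    intro i
    have huniv : (univ : Finset (ZMod 2)) = {0, 1} := rfl
    split_ifs <;> simp [huniv]
  have hτ : univ.filter (· ∉ σ) ∩ τ = τ := by
    ext j; simpa using fun hj => disjoint_right.mp hd hj
  calc psm σ τ = ∏ i, if i ∈ σ then X i else if i ∈ τ then 1 - X i else 1 := by
        rw [prod_ite, filter_univ_mem, prod_ite_mem, hτ, psm]
    _ = _ := by simp only [← hsum, prod_univ_sum, indic]

theorem psm_mem_neuralIdeal_iff {C : Set (Fin n → ZMod 2)} {σ τ : Finset (Fin n)}
    (hd : Disjoint σ τ) : psm σ τ ∈ neuralIdeal C ↔ ∀ c ∈ C, eval c (psm σ τ) = 0 := by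
  refine ⟨fun h c hc => eval_eq_zero_of_mem_neuralIdeal h hc, fun h => ?_⟩
  rw [psm_eq_sum_indic hd]
  refine Ideal.sum_mem _ fun c hc => Ideal.subset_span ⟨c, fun hcC => ?_, rfl⟩
  refine eval_psm_ne_zero_iff.mpr ⟨fun i hi => ?_, fun j hj => ?_⟩ (h c hcC)
  · simpa [hi] using Fintype.mem_piFinset.mp hc i
  · simpa [hj, disjoint_right.mp hd hj] using Fintype.mem_piFinset.mp hc j

theorem polz_mem_span_X_image_iff {σ τ : Finset (Fin n)} {W : Set (Fin n ⊕ Fin n)} :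
    polz σ τ ∈ Ideal.span (X '' W : Set (MvPolynomial (Fin n ⊕ Fin n) (ZMod 2))) ↔
      (∃ i ∈ σ, Sum.inl i ∈ W) ∨ ∃ j ∈ τ, Sum.inr j ∈ W := by
  rw [polz, ← prod_disjSum, prod_X_mem_span_X_image_iff]
  simp

end Pseudomonomial

section PartialWord

variable {n : ℕ} {p : Fin n → Prop} [DecidablePred p]

def levelSet (v : Subtype p → ZMod 2) (a : ZMod 2) : Finset (Fin n) :=
  univ.filter fun i => ∃ h : p i, v ⟨i, h⟩ = a

theorem mem_levelSet {v : Subtype p → ZMod 2} {a : ZMod 2} {i : Fin n} :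
    i ∈ levelSet v a ↔ ∃ h : p i, v ⟨i, h⟩ = a := by
  simp [levelSet]

theorem disjoint_levelSet {v : Subtype p → ZMod 2} {a b : ZMod 2} (hab : a ≠ b) :
    Disjoint (levelSet v a) (levelSet v b) := by
  refine disjoint_left.mpr fun i hia hib => hab ?_
  obtain ⟨h, rfl⟩ := mem_levelSet.mp hia
  obtain ⟨-, rfl⟩ := mem_levelSet.mp hib
  rfl

theorem eval_psm_levelSet_ne_zero_iff (v : Subtype p → ZMod 2) (c : Fin n → ZMod 2) :
    eval c (psm (levelSet v 1) (levelSet v 0)) ≠ 0 ↔ (fun i : Subtype p => c i) = v := by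
  have h01 : ∀ a : ZMod 2, a = 0 ∨ a = 1 := by decide
  simp only [eval_psm_ne_zero_iff, mem_levelSet, forall_exists_index, funext_iff, Subtype.forall]
  refine ⟨fun ⟨h1, h0⟩ i hi => ?_,
    fun h => ⟨fun i hi hv => h i hi ▸ hv, fun i hi hv => h i hi ▸ hv⟩⟩
  rcases h01 (v ⟨i, hi⟩) with hv | hv
  · rw [hv, h0 i hi hv]
  · rw [hv, h1 i hi hv]

theorem exists_isMinimalPseudomonomial_levelSet {C : Set (Fin n → ZMod 2)}
    {v : Subtype p → ZMod 2} (hv : v ∉ (fun (c : Fin n → ZMod 2) (i : Subtype p) => c i) '' C) :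
    ∃ σ ⊆ levelSet v 1, ∃ τ ⊆ levelSet v 0, IsMinimalPseudomonomial (neuralIdeal C) (psm σ τ) := by
  have hd : Disjoint (levelSet v 1) (levelSet v 0) := disjoint_levelSet one_ne_zero
  refine exists_isMinimalPseudomonomial_subset hd ((psm_mem_neuralIdeal_iff hd).mpr ?_)
  intro c hc
  by_contra h
  exact hv ⟨c, hc, (eval_psm_levelSet_ne_zero_iff v c).mp h⟩

theorem not_subset_levelSet_of_psm_mem_neuralIdeal {C : Set (Fin n → ZMod 2)}
    {σ τ : Finset (Fin n)} (h : psm σ τ ∈ neuralIdeal C) {v : Subtype p → ZMod 2}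
    (hv : v ∈ (fun (c : Fin n → ZMod 2) (i : Subtype p) => c i) '' C) :
    ¬(σ ⊆ levelSet v 1 ∧ τ ⊆ levelSet v 0) := by
  obtain ⟨c, hc, rfl⟩ := hv
  rintro ⟨hσ, hτ⟩
  refine eval_psm_ne_zero_iff.mpr ⟨fun i hi => ?_, fun j hj => ?_⟩
    (eval_eq_zero_of_mem_neuralIdeal h hc)
  · exact (mem_levelSet.mp (hσ hi)).snd
  · exact (mem_levelSet.mp (hτ hj)).snd

end PartialWord

theorem polar_ideal_le_monomial_prime_iff {n : ℕ} (C : Set (Fin n → ZMod 2))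
    (W : Set (Fin n ⊕ Fin n)) :
    -- `b(W)` is the set of indices `i` with both `x_i ∈ W` and `y_i ∈ W`;
    -- the quotient code `C / b(W)` consists of restrictions of codewords of `C`
    -- to the coordinates outside `b(W)`;
    -- `V_W` is the interval of points of `{0,1}^{[n]∖b(W)}` which are `0` on `x(W)`
    -- and `1` on `y(W)`.
    polarNeuralIdeal C ≤ Ideal.span (MvPolynomial.X '' W) ↔
      {c : {i : Fin n // ¬(Sum.inl i ∈ W ∧ Sum.inr i ∈ W)} → ZMod 2 |
          ∀ i, (Sum.inl i.1 ∈ W → c i = 0) ∧ (Sum.inr i.1 ∈ W → c i = 1)} ⊆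
        (fun (c : Fin n → ZMod 2) (i : {i : Fin n // ¬(Sum.inl i ∈ W ∧ Sum.inr i ∈ W)}) =>
          c i.1) '' C := by
  classical
  constructor
  · intro hP v hv
    by_contra hvC
    obtain ⟨σ, hσ, τ, hτ, hmin⟩ := exists_isMinimalPseudomonomial_levelSet hvC
    have hd : Disjoint σ τ := (disjoint_levelSet one_ne_zero).mono hσ hτ
    rcases polz_mem_span_X_image_iff.mp (hP (Ideal.subset_span ⟨σ, τ, hd, hmin, rfl⟩)) with
      ⟨i, hi, hiW⟩ | ⟨j, hj, hjW⟩
    · obtain ⟨hb, hvi⟩ := mem_levelSet.mp (hσ hi)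
      exact zero_ne_one (((hv ⟨i, hb⟩).1 hiW).symm.trans hvi)
    · obtain ⟨hb, hvj⟩ := mem_levelSet.mp (hτ hj)
      exact one_ne_zero (((hv ⟨j, hb⟩).2 hjW).symm.trans hvj)
  · intro hV
    rw [polarNeuralIdeal, Ideal.span_le]
    rintro _ ⟨σ, τ, hd, hmin, rfl⟩
    rw [SetLike.mem_coe, polz_mem_span_X_image_iff]
    by_contra! ⟨hσW, hτW⟩
    let v : {i : Fin n // ¬(Sum.inl i ∈ W ∧ Sum.inr i ∈ W)} → ZMod 2 :=
      fun i => if i.1 ∈ σ ∨ Sum.inr i.1 ∈ W then 1 else 0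
    have hvV : ∀ i, (Sum.inl i.1 ∈ W → v i = 0) ∧ (Sum.inr i.1 ∈ W → v i = 1) := fun i =>
      ⟨fun hx => if_neg (not_or.mpr ⟨fun hi => hσW i hi hx, fun hy => i.2 ⟨hx, hy⟩⟩),
        fun hy => if_pos (Or.inr hy)⟩
    refine not_subset_levelSet_of_psm_mem_neuralIdeal hmin.2.1 (hV hvV)
      ⟨fun i hi => ?_, fun j hj => ?_⟩
    · exact mem_levelSet.mpr ⟨fun h => hσW i hi h.1, if_pos (Or.inl hi)⟩
    · exact mem_levelSet.mpr ⟨fun h => hτW j hj h.2,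
        if_neg (not_or.mpr ⟨disjoint_right.mp hd hj, hτW j hj⟩)⟩
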